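/- Under the higher order adaptive control tuner (with Q = 2I and μ = 2γ‖Pb‖²/β), for all T ≥ 0: ∫₀^T ‖e(t)‖² dt ≤ V(0), where V = (1/γ)‖ϑ - θ*‖² + (1/γ)‖θ - ϑ‖² + eᵀPe. That is, the continuous-time regret in tracking error is uniformly bounded (O(1)). -/

import Mathlib

open Matrix

local notation "⟪" x ", " y "⟫" => @inner ℝ _ _ x y

/-!
The Lyapunov function `V = (1/γ)‖ϑ - θ*‖² + (1/γ)‖θ - ϑ‖² + eᵀPe` satisfies
`V' = -2‖e‖² + 4⟪e, Pb⟫⟪θ - ϑ, φ⟫ - (2β/γ)(1 + μ‖φ‖²)‖θ - ϑ‖²`: the Lyapunov equation turns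
`eᵀPe` into `-2‖e‖²`, and the `ϑ - θ*` cross terms cancel against the plant's input term. The
normalisation `μ‖φ‖²` in the gain of `θ` is chosen so that the remaining cross term is absorbed
by AM-GM, `4⟪e, Pb⟫⟪θ - ϑ, φ⟫ ≤ ‖e‖² + 4‖Pb‖²‖φ‖²‖θ - ϑ‖²`, leaving `V' ≤ -‖e‖²`. Integrating
from `0` to `T` and using `V ≥ 0` bounds the regret by `V(0)`.
-/

section Lyapunov

variable {ι : Type*} [Fintype ι] [DecidableEq ι]

theorem Matrix.toEuclideanLin_mul_apply (M N : Matrix ι ι ℝ) (x : EuclideanSpace ℝ ι) :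
    toEuclideanLin (M * N) x = toEuclideanLin M (toEuclideanLin N x) := by
  ext; simp [mulVec_mulVec]

theorem Matrix.inner_toEuclideanLin_transpose (M : Matrix ι ι ℝ) (x y : EuclideanSpace ℝ ι) :
    ⟪toEuclideanLin M x, y⟫ = ⟪x, toEuclideanLin Mᵀ y⟫ := by
  rw [← conjTranspose_eq_transpose_of_trivial, toEuclideanLin_conjTranspose_eq_adjoint,
    LinearMap.adjoint_inner_right]

theorem Matrix.inner_toEuclideanLin_lyapunov {A P : Matrix ι ι ℝ} {c : ℝ}
    (h : Aᵀ * P + P * A = -(c • 1)) (x : EuclideanSpace ℝ ι) :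
    ⟪x, toEuclideanLin P (toEuclideanLin A x)⟫ + ⟪toEuclideanLin A x, toEuclideanLin P x⟫
      = -(c * ‖x‖ ^ 2) := by
  rw [inner_toEuclideanLin_transpose, ← inner_add_right, ← toEuclideanLin_mul_apply,
    ← toEuclideanLin_mul_apply, ← LinearMap.add_apply, ← map_add, add_comm, h]
  simp [real_inner_smul_right]

theorem HasDerivAt.inner_toEuclideanLin_self {e : ℝ → EuclideanSpace ℝ ι}
    {e' : EuclideanSpace ℝ ι} {t : ℝ} (P : Matrix ι ι ℝ) (he : HasDerivAt e e' t) :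
    HasDerivAt (fun s => ⟪e s, toEuclideanLin P (e s)⟫)
      (⟪e t, toEuclideanLin P e'⟫ + ⟪e', toEuclideanLin P (e t)⟫) t :=
  he.inner ℝ ((toEuclideanLin P).toContinuousLinearMap.hasFDerivAt.comp_hasDerivAt t he)

theorem HasDerivAt.inner_toEuclideanLin_self_of_lyapunov {A P : Matrix ι ι ℝ} {c : ℝ}
    (hP : (toEuclideanLin P).IsSymmetric) (hLyap : Aᵀ * P + P * A = -(c • 1))
    {e : ℝ → EuclideanSpace ℝ ι} {b : EuclideanSpace ℝ ι} {w t : ℝ}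
    (he : HasDerivAt e (toEuclideanLin A (e t) + w • b) t) :
    HasDerivAt (fun s => ⟪e s, toEuclideanLin P (e s)⟫)
      (-(c * ‖e t‖ ^ 2) + 2 * w * ⟪e t, toEuclideanLin P b⟫) t := by
  convert he.inner_toEuclideanLin_self P using 1
  have hb : ⟪b, toEuclideanLin P (e t)⟫ = ⟪e t, toEuclideanLin P b⟫ := by
    rw [← hP, real_inner_comm]
  simp only [map_add, map_smul, inner_add_left, inner_add_right, real_inner_smul_left,
    real_inner_smul_right, hb]
  linear_combination -inner_toEuclideanLin_lyapunov hLyap (e t)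

end Lyapunov

theorem integral_le_sub_of_hasDerivAt_of_le_neg {V V' f : ℝ → ℝ} {a b : ℝ} (hab : a ≤ b)
    (hV : ∀ t, HasDerivAt V (V' t) t) (hf : Continuous f) (hle : ∀ t, V' t ≤ -f t) :
    ∫ t in a..b, f t ≤ V a - V b := by
  have := intervalIntegral.integral_le_sub_of_hasDeriv_right_of_le hab
    (fun t _ => (hV t).neg.continuousAt.continuousWithinAt)
    (fun t _ => (hV t).neg.hasDerivWithinAt) (hf.integrableOn_Icc) (fun t _ => le_neg.2 (hle t))
  simpa only [Pi.neg_apply, neg_sub_neg] using this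

section Tuner

variable {ι F : Type*} [Fintype ι] [DecidableEq ι] [NormedAddCommGroup F]

noncomputable def tunerLyapunov (γ : ℝ) (P : Matrix ι ι ℝ) (θstar : F)
    (e : ℝ → EuclideanSpace ℝ ι) (θ ϑ : ℝ → F) (t : ℝ) : ℝ :=
  (1 / γ) * ‖ϑ t - θstar‖ ^ 2 + (1 / γ) * ‖θ t - ϑ t‖ ^ 2 + ⟪e t, toEuclideanLin P (e t)⟫

theorem tunerLyapunov_nonneg {γ : ℝ} (hγ : 0 ≤ γ) {P : Matrix ι ι ℝ}
    (hP : (toEuclideanLin P).IsPositive) (θstar : F) (e : ℝ → EuclideanSpace ℝ ι)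
    (θ ϑ : ℝ → F) (t : ℝ) : 0 ≤ tunerLyapunov γ P θstar e θ ϑ t := by
  have := hP.inner_nonneg_right (e t)
  unfold tunerLyapunov
  positivity

variable [InnerProductSpace ℝ F]

theorem hasDerivAt_tunerLyapunov {γ c k t : ℝ} (hγ : γ ≠ 0) {A P : Matrix ι ι ℝ}
    (hP : (toEuclideanLin P).IsSymmetric) (hLyap : Aᵀ * P + P * A = -(c • 1))
    {b : EuclideanSpace ℝ ι} {φ θstar : F} {e : ℝ → EuclideanSpace ℝ ι} {θ ϑ : ℝ → F}
    (he : HasDerivAt e (toEuclideanLin A (e t) + ⟪θ t - θstar, φ⟫ • b) t)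
    (hϑ : HasDerivAt ϑ ((-γ * ⟪e t, toEuclideanLin P b⟫) • φ) t)
    (hθ : HasDerivAt θ ((-k) • (θ t - ϑ t)) t) :
    HasDerivAt (tunerLyapunov γ P θstar e θ ϑ)
      (-(c * ‖e t‖ ^ 2) + 4 * ⟪e t, toEuclideanLin P b⟫ * ⟪θ t - ϑ t, φ⟫
        - 2 * k / γ * ‖θ t - ϑ t‖ ^ 2) t := by
  have hv := ((hϑ.sub_const θstar).norm_sq).const_mul (1 / γ)
  have hu := ((hθ.sub hϑ).norm_sq).const_mul (1 / γ)
  have hq := he.inner_toEuclideanLin_self_of_lyapunov hP hLyap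
  refine ((hv.add hu).add hq).congr_deriv ?_
  rw [Pi.sub_apply, ← sub_add_sub_cancel (θ t) (ϑ t) θstar]
  generalize θ t - ϑ t = u
  generalize ϑ t - θstar = v
  simp only [inner_add_right, inner_sub_right, inner_smul_right, real_inner_self_eq_norm_sq,
    real_inner_comm φ]
  field_simp
  ring

theorem tunerLyapunov_deriv_le {E : Type*} [NormedAddCommGroup E] [InnerProductSpace ℝ E]
    {β γ : ℝ} (hβ : 0 < β) (hγ : 0 < γ) (e p : E) (u φ : F) :
    -(2 * ‖e‖ ^ 2) + 4 * ⟪e, p⟫ * ⟪u, φ⟫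
      - 2 * (β * (1 + 2 * γ * ‖p‖ ^ 2 / β * ‖φ‖ ^ 2)) / γ * ‖u‖ ^ 2 ≤ -‖e‖ ^ 2 := by
  have hcs : ⟪e, p⟫ * ⟪u, φ⟫ ≤ (‖e‖ * ‖p‖) * (‖u‖ * ‖φ‖) := by
    refine (le_abs_self _).trans ?_
    rw [abs_mul]
    exact mul_le_mul (abs_real_inner_le_norm _ _) (abs_real_inner_le_norm _ _) (abs_nonneg _)
      (by positivity)
  have hgain : 2 * (β * (1 + 2 * γ * ‖p‖ ^ 2 / β * ‖φ‖ ^ 2)) / γ * ‖u‖ ^ 2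
      = 2 * β / γ * ‖u‖ ^ 2 + 4 * (‖p‖ * ‖φ‖ * ‖u‖) ^ 2 := by
    field_simp
    ring
  have hdamp : 0 ≤ 2 * β / γ * ‖u‖ ^ 2 := by positivity
  rw [hgain]
  nlinarith [sq_nonneg (‖e‖ - 2 * (‖p‖ * ‖φ‖ * ‖u‖))]

end Tuner

theorem stmt_14_general {n d : ℕ} (β γ : ℝ) (hβ : 0 < β) (hγ : 0 < γ)
    (A P : Matrix (Fin n) (Fin n) ℝ) (hP : P.PosDef)
    (hLyap : Aᵀ * P + P * A = -((2 : ℝ) • (1 : Matrix (Fin n) (Fin n) ℝ)))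
    (b : EuclideanSpace ℝ (Fin n))
    (φ : ℝ → EuclideanSpace ℝ (Fin d))
    (θstar : EuclideanSpace ℝ (Fin d))
    (e : ℝ → EuclideanSpace ℝ (Fin n)) (θ ϑ : ℝ → EuclideanSpace ℝ (Fin d))
    (Nt : ℝ → ℝ)
    (hNt : Nt = fun t => 1 + (2 * γ * ‖Matrix.toEuclideanLin P b‖ ^ 2 / β) * ‖φ t‖ ^ 2)
    (he : ∀ t : ℝ, HasDerivAt e
      (Matrix.toEuclideanLin A (e t) + ⟪θ t - θstar, φ t⟫ • b) t)
    (hϑ : ∀ t : ℝ, HasDerivAt ϑ ((-γ * ⟪e t, Matrix.toEuclideanLin P b⟫) • φ t) t)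
    (hθ : ∀ t : ℝ, HasDerivAt θ ((-(β * Nt t)) • (θ t - ϑ t)) t) :
    ∀ T : ℝ, 0 ≤ T →
      ∫ t in (0 : ℝ)..T, ‖e t‖ ^ 2
        ≤ (1 / γ) * ‖ϑ 0 - θstar‖ ^ 2 + (1 / γ) * ‖θ 0 - ϑ 0‖ ^ 2
          + ⟪e 0, Matrix.toEuclideanLin P (e 0)⟫ := by
  intro T hT
  have hPpos := Matrix.isPositive_toEuclideanLin_iff.mpr hP.posSemidef
  have hcont : Continuous fun t => ‖e t‖ ^ 2 :=
    (continuous_iff_continuousAt.2 fun t => (he t).continuousAt).norm.pow 2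
  have hregret := integral_le_sub_of_hasDerivAt_of_le_neg hT
    (fun t => hasDerivAt_tunerLyapunov hγ.ne' hPpos.isSymmetric hLyap (he t) (hϑ t) (hθ t))
    hcont (fun t => by subst hNt; exact tunerLyapunov_deriv_le hβ hγ _ _ _ _)
  exact hregret.trans (sub_le_self _ (tunerLyapunov_nonneg hγ.le hPpos θstar e θ ϑ T))

/-- Higher order tuner for adaptive control (`Q = 2I`, `μ = 2γ‖Pb‖²/β`): constant regret,
`∫₀^T ‖e‖² ≤ V(0)` for all `T ≥ 0` where
`V = (1/γ)‖ϑ - θ*‖² + (1/γ)‖θ - ϑ‖² + eᵀPe`. -/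
theorem stmt_14 {n d : ℕ} (β γ : ℝ) (hβ : 0 < β) (hγ : 0 < γ)
    (A P : Matrix (Fin n) (Fin n) ℝ) (hP : P.PosDef)
    (hLyap : Aᵀ * P + P * A = -((2 : ℝ) • (1 : Matrix (Fin n) (Fin n) ℝ)))
    (b : EuclideanSpace ℝ (Fin n))
    (φ : ℝ → EuclideanSpace ℝ (Fin d)) (hφ : Continuous φ)
    (θstar : EuclideanSpace ℝ (Fin d))
    (e : ℝ → EuclideanSpace ℝ (Fin n)) (θ ϑ : ℝ → EuclideanSpace ℝ (Fin d))
    (Nt : ℝ → ℝ)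
    (hNt : Nt = fun t => 1 + (2 * γ * ‖Matrix.toEuclideanLin P b‖ ^ 2 / β) * ‖φ t‖ ^ 2)
    (he : ∀ t : ℝ, HasDerivAt e
      (Matrix.toEuclideanLin A (e t) + ⟪θ t - θstar, φ t⟫ • b) t)
    (hϑ : ∀ t : ℝ, HasDerivAt ϑ ((-γ * ⟪e t, Matrix.toEuclideanLin P b⟫) • φ t) t)
    (hθ : ∀ t : ℝ, HasDerivAt θ ((-(β * Nt t)) • (θ t - ϑ t)) t) :
    ∀ T : ℝ, 0 ≤ T →
      ∫ t in (0 : ℝ)..T, ‖e t‖ ^ 2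
        ≤ (1 / γ) * ‖ϑ 0 - θstar‖ ^ 2 + (1 / γ) * ‖θ 0 - ϑ 0‖ ^ 2
          + ⟪e 0, Matrix.toEuclideanLin P (e 0)⟫ :=
  stmt_14_general β γ hβ hγ A P hP hLyap b φ θstar e θ ϑ Nt hNt he hϑ hθ
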